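/- arXiv:2408.09655 — 4 statements merged into one kernel-verified Lean document; each statement's English description precedes it below -/
import Mathlib

section
/- Let X be a random vector in R^d with density f such that E[‖X‖^p] < ∞ for some p > 0. Then for every β with 0 < β < p/(p+d), the integral ∫ f(x)^{1-β} dx is finite. -/
open MeasureTheory

/-- If a probability density `f` on `ℝ^d` has finite `p`-th moment, then
`∫ f(x)^(1-β) dx < ∞` for every `0 < β < p/(p+d)`. -/
theorem stmt1 {d : ℕ} (p β : ℝ) (hp : 0 < p)
    (f : EuclideanSpace ℝ (Fin d) → ℝ) (hfmeas : Measurable f) (hf0 : ∀ x, 0 ≤ f x)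
    (hfdens : ∫⁻ x, ENNReal.ofReal (f x) = 1)
    (hmoment : ∫⁻ x, ENNReal.ofReal (‖x‖ ^ p * f x) < ⊤)
    (hβ0 : 0 < β) (hβ : β < p / (p + d)) :
    ∫⁻ x, ENNReal.ofReal (f x ^ (1 - β)) < ⊤ := by
  have hpd : 0 < p + d := by positivity
  have hβ1 : β < 1 := lt_of_lt_of_le hβ (by
    rw [div_le_one hpd]; linarith [Nat.cast_nonneg (α := ℝ) d])
  have h1β : 0 < 1 - β := by linarith
  -- the auxiliary weight
  set w : EuclideanSpace ℝ (Fin d) → ENNReal := fun x => ENNReal.ofReal (1 + ‖x‖) ^ p with hw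
  have hwpos : ∀ x : EuclideanSpace ℝ (Fin d), 0 < ENNReal.ofReal (1 + ‖x‖) := fun x => by
    rw [ENNReal.ofReal_pos]; linarith [norm_nonneg x]
  have hw0 : ∀ x, w x ≠ 0 := fun x =>
    (ENNReal.rpow_pos (hwpos x) ENNReal.ofReal_ne_top).ne'
  have hwt : ∀ x, w x ≠ ⊤ := fun x =>
    ENNReal.rpow_ne_top_of_nonneg hp.le ENNReal.ofReal_ne_top
  set g : EuclideanSpace ℝ (Fin d) → ENNReal := fun x => ENNReal.ofReal (f x) with hg
  have hgmeas : Measurable g := hfmeas.ennreal_ofReal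
  have hwmeas : Measurable w := by
    apply Measurable.pow_const
    exact (measurable_const.add measurable_norm).ennreal_ofReal
  -- Hölder
  have hconj : (1 / (1 - β)).HolderConjugate (1 / β) := by
    constructor
    · rw [one_div, one_div, inv_inv, inv_inv, inv_one]; ring
    · positivity
    · positivity
  have key := ENNReal.lintegral_mul_le_Lp_mul_Lq (volume)
    hconj (f := fun x => (g x * w x) ^ (1 - β)) (g := fun x => w x ^ (-(1 - β)))
    (((hgmeas.mul hwmeas).pow_const _).aemeasurable)
    ((hwmeas.pow_const _).aemeasurable)
  -- rewrite the left side
  have hL : ∀ x, ENNReal.ofReal (f x ^ (1 - β)) =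
      ((g x * w x) ^ (1 - β) * w x ^ (-(1 - β))) := by
    intro x
    rw [ENNReal.mul_rpow_of_nonneg _ _ h1β.le, mul_assoc,
      ← ENNReal.rpow_add _ _ (hw0 x) (hwt x)]
    simp [hg, ← ENNReal.ofReal_rpow_of_nonneg (hf0 x) h1β.le]
  -- first Hölder factor
  have hF : ∀ x, ((g x * w x) ^ (1 - β)) ^ (1 / (1 - β)) = g x * w x := by
    intro x
    rw [← ENNReal.rpow_mul, mul_one_div_cancel h1β.ne', ENNReal.rpow_one]
  -- second Hölder factor
  have hG : ∀ x, (w x ^ (-(1 - β))) ^ (1 / β) =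
      ENNReal.ofReal ((1 + ‖x‖) ^ (-(p * (1 - β) / β))) := by
    intro x
    rw [hw, ← ENNReal.rpow_mul, ← ENNReal.rpow_mul,
      ENNReal.ofReal_rpow_of_pos (by positivity)]
    ring_nf
  -- finiteness of the moment-type integral
  have hA : ∫⁻ x, g x * w x < ⊤ := by
    have hbound : ∀ x, g x * w x ≤
        ENNReal.ofReal (2 ^ p) * (ENNReal.ofReal (f x) + ENNReal.ofReal (‖x‖ ^ p * f x)) := by
      intro x
      have h2 : (1 + ‖x‖) ^ p ≤ 2 ^ p * (1 + ‖x‖ ^ p) := by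
        rcases le_total (‖x‖) 1 with h | h
        · calc (1 + ‖x‖) ^ p ≤ 2 ^ p := by
                apply Real.rpow_le_rpow (by positivity) (by linarith) hp.le
          _ ≤ 2 ^ p * (1 + ‖x‖ ^ p) := by
                nlinarith [Real.rpow_pos_of_pos (two_pos (α := ℝ)) p,
                  Real.rpow_nonneg (norm_nonneg x) p]
        · calc (1 + ‖x‖) ^ p ≤ (2 * ‖x‖) ^ p := by
                apply Real.rpow_le_rpow (by positivity) (by linarith) hp.le
          _ = 2 ^ p * ‖x‖ ^ p := Real.mul_rpow (by norm_num) (norm_nonneg x)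
          _ ≤ 2 ^ p * (1 + ‖x‖ ^ p) := by
                nlinarith [Real.rpow_pos_of_pos (two_pos (α := ℝ)) p]
      calc g x * w x = ENNReal.ofReal (f x * (1 + ‖x‖) ^ p) := by
            simp only [hg, hw]
            rw [ENNReal.ofReal_mul (hf0 x),
              ENNReal.ofReal_rpow_of_pos (by positivity)]
      _ ≤ ENNReal.ofReal (2 ^ p * (f x + ‖x‖ ^ p * f x)) := by
            apply ENNReal.ofReal_le_ofReal
            have := mul_le_mul_of_nonneg_left h2 (hf0 x)
            nlinarith [hf0 x]
      _ = ENNReal.ofReal (2 ^ p) * (ENNReal.ofReal (f x) + ENNReal.ofReal (‖x‖ ^ p * f x)) := by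
            rw [ENNReal.ofReal_mul (Real.rpow_nonneg (by norm_num) p),
              ENNReal.ofReal_add (hf0 x) (mul_nonneg (Real.rpow_nonneg (norm_nonneg x) p) (hf0 x))]
    calc ∫⁻ x, g x * w x
        ≤ ∫⁻ x, ENNReal.ofReal (2 ^ p) *
            (ENNReal.ofReal (f x) + ENNReal.ofReal (‖x‖ ^ p * f x)) :=
          lintegral_mono hbound
      _ = ENNReal.ofReal (2 ^ p) *
            (∫⁻ x, (ENNReal.ofReal (f x) + ENNReal.ofReal (‖x‖ ^ p * f x))) := by
          rw [lintegral_const_mul]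
          exact hfmeas.ennreal_ofReal.add
            ((measurable_norm.pow_const p).mul hfmeas).ennreal_ofReal
      _ < ⊤ := by
          rw [lintegral_add_left hfmeas.ennreal_ofReal, hfdens]
          exact ENNReal.mul_lt_top ENNReal.ofReal_lt_top
            (by simpa using hmoment)
  -- finiteness of the Japanese-bracket integral
  have hB : ∫⁻ x : EuclideanSpace ℝ (Fin d),
      ENNReal.ofReal ((1 + ‖x‖) ^ (-(p * (1 - β) / β))) < ⊤ := by
    apply finite_integral_one_add_norm
    rw [finrank_euclideanSpace_fin, lt_div_iff₀ hβ0]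
    rw [lt_div_iff₀ hpd] at hβ
    nlinarith
  -- put everything together
  calc ∫⁻ x, ENNReal.ofReal (f x ^ (1 - β))
      = ∫⁻ x, ((fun x => (g x * w x) ^ (1 - β)) * fun x => w x ^ (-(1 - β))) x := by
        simp only [Pi.mul_apply]; exact lintegral_congr hL
    _ ≤ (∫⁻ x, ((g x * w x) ^ (1 - β)) ^ (1 / (1 - β))) ^ (1 / (1 / (1 - β))) *
          (∫⁻ x, (w x ^ (-(1 - β))) ^ (1 / β)) ^ (1 / (1 / β)) := by
        simpa using key
    _ < ⊤ := by
        apply ENNReal.mul_lt_top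
        · rw [lintegral_congr hF]
          exact ENNReal.rpow_lt_top_of_nonneg (by positivity) hA.ne
        · rw [lintegral_congr hG]
          exact ENNReal.rpow_lt_top_of_nonneg (by positivity) hB.ne
end

section
/- Let η be a nonnegative random variable with P(0 < η < t) ≤ C_α t^α for all t > 0, where 0 < α and d > α + 1 is an integer. Then for every ε ∈ (0,1), E[η^{−(d−1)} 1{η > ε}] ≤ C_α (d−1)/(d−1−α) · ε^{α+1−d}. -/
open MeasureTheory

open Set

/-- Under the margin condition `P(0 < η < t) ≤ C_α t^α` with `d > α + 1`, for every
`ε ∈ (0,1)`, `E[η^{-(d-1)} 1{η > ε}] ≤ C_α (d-1)/(d-1-α) · ε^{α+1-d}`. -/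
theorem stmt8 {Ω : Type*} [MeasurableSpace Ω] (P : Measure Ω) [IsProbabilityMeasure P]
    (η : Ω → ℝ) (hη : Measurable η) (hη0 : ∀ ω, 0 ≤ η ω)
    (Cα α : ℝ) (hCα : 0 < Cα) (hα : 0 < α) (d : ℕ) (hd : α + 1 < (d : ℝ))
    (hmargin : ∀ t > 0, P {ω | 0 < η ω ∧ η ω < t} ≤ ENNReal.ofReal (Cα * t ^ α))
    (ε : ℝ) (hε : ε ∈ Set.Ioo (0 : ℝ) 1) :
    ∫⁻ ω in {ω | ε < η ω}, ENNReal.ofReal (η ω ^ (-((d : ℝ) - 1))) ∂P ≤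
      ENNReal.ofReal (Cα * ((d : ℝ) - 1) / ((d : ℝ) - 1 - α) * ε ^ (α + 1 - (d : ℝ))) := by
  obtain ⟨hε0, hε1⟩ := hε
  set β : ℝ := (d : ℝ) - 1 with hβdef
  have hαβ : α < β := by simp only [hβdef]; linarith
  have hβ : 0 < β := lt_trans hα hαβ
  set T : ℝ := ε ^ (-β) with hTdef
  have hT : 0 < T := Real.rpow_pos_of_pos hε0 _
  set S : Set Ω := {ω | ε < η ω} with hSdef
  have hSm : MeasurableSet S := measurableSet_lt measurable_const hη
  have fmble : Measurable fun ω => η ω ^ (-β) := by fun_prop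
  have hsetm : ∀ t : ℝ, MeasurableSet {a | t < η a ^ (-β)} := fun t =>
    measurableSet_lt measurable_const fmble
  -- layer cake
  rw [lintegral_eq_lintegral_meas_lt (P.restrict S)
      (Filter.Eventually.of_forall fun ω => Real.rpow_nonneg (hη0 ω) _) fmble.aemeasurable]
  have hsplit : Ioi (0 : ℝ) = Ioc 0 T ∪ Ioi T := (Ioc_union_Ioi_eq_Ioi hT.le).symm
  rw [hsplit, lintegral_union measurableSet_Ioi Ioc_disjoint_Ioi_same]
  have hz : ∫⁻ t in Ioi T, (P.restrict S) {a | t < η a ^ (-β)} = 0 := by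
    rw [setLIntegral_congr_fun measurableSet_Ioi
      (fun ⦃t⦄ (ht : T < t) => ?_), lintegral_zero]
    rw [Measure.restrict_apply (hsetm t)]
    convert measure_empty
    · ext ω
      simp only [mem_inter_iff, mem_setOf_eq, mem_empty_iff_false, iff_false, not_and]
      intro h1 h2
      have : η ω ^ (-β) < T := Real.rpow_lt_rpow_of_neg hε0 h2 (neg_neg_of_pos hβ)
      linarith
    · infer_instance
  rw [hz, add_zero]
  have hbound : ∫⁻ t in Ioc 0 T, (P.restrict S) {a | t < η a ^ (-β)} ≤
      ∫⁻ t in Ioc 0 T, ENNReal.ofReal (Cα * t ^ (-(α / β))) := by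
    apply setLIntegral_mono (by fun_prop) (fun t ht => ?_)
    obtain ⟨ht0, htT⟩ := ht
    rw [Measure.restrict_apply (hsetm t)]
    have hsub : {a | t < η a ^ (-β)} ∩ S ⊆ {ω | 0 < η ω ∧ η ω < t ^ (-(1/β))} := by
      rintro ω ⟨h1, h2⟩
      have hη0' : (0:ℝ) < η ω := lt_trans hε0 h2
      refine ⟨hη0', ?_⟩
      have hneg : -(1/β) < (0:ℝ) := by
        have : (0:ℝ) < 1/β := by positivity
        linarith
      have h3 := Real.rpow_lt_rpow_of_neg ht0 h1 hneg
      rwa [← Real.rpow_mul hη0'.le, neg_mul_neg, mul_one_div, div_self hβ.ne',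
        Real.rpow_one] at h3
    calc P ({a | t < η a ^ (-β)} ∩ S) ≤ P {ω | 0 < η ω ∧ η ω < t ^ (-(1/β))} :=
          measure_mono hsub
      _ ≤ ENNReal.ofReal (Cα * (t ^ (-(1/β))) ^ α) :=
          hmargin _ (Real.rpow_pos_of_pos ht0 _)
      _ = ENNReal.ofReal (Cα * t ^ (-(α / β))) := by
          rw [← Real.rpow_mul ht0.le, neg_mul, one_div, inv_mul_eq_div]
  refine le_trans hbound ?_
  -- compute the integral
  have hr : (-1:ℝ) < -(α / β) := by
    rw [neg_lt_neg_iff, div_lt_one hβ]; exact hαβ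
  have hint : IntegrableOn (fun t : ℝ => t ^ (-(α / β))) (Ioc 0 T) := by
    rw [← uIoc_of_le hT.le, ← intervalIntegrable_iff]
    exact intervalIntegral.intervalIntegrable_rpow' hr
  have hint' : IntegrableOn (fun t : ℝ => Cα * t ^ (-(α / β))) (Ioc 0 T) :=
    hint.const_mul Cα
  have hnn : 0 ≤ᵐ[volume.restrict (Ioc 0 T)] fun t : ℝ => Cα * t ^ (-(α / β)) := by
    filter_upwards [ae_restrict_mem measurableSet_Ioc] with t ht
    exact mul_nonneg hCα.le (Real.rpow_nonneg ht.1.le _)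
  rw [← ofReal_integral_eq_lintegral_ofReal hint' hnn]
  apply ENNReal.ofReal_le_ofReal
  have hcalc : ∫ t in Ioc 0 T, Cα * t ^ (-(α / β)) =
      Cα * (T ^ (-(α / β) + 1) / (-(α / β) + 1)) := by
    rw [← intervalIntegral.integral_of_le hT.le, intervalIntegral.integral_const_mul,
      integral_rpow (Or.inl hr), Real.zero_rpow (by linarith), sub_zero]
  rw [hcalc]
  have he1 : -(α / β) + 1 = (β - α) / β := by field_simp; ring
  have he2 : T ^ (-(α / β) + 1) = ε ^ (α + 1 - (d : ℝ)) := by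
    rw [hTdef, ← Real.rpow_mul hε0.le, he1]
    congr 1
    rw [hβdef]
    have hb : ((d:ℝ) - 1) ≠ 0 := by linarith
    field_simp
    ring
  rw [he2, he1]
  have : Cα * (ε ^ (α + 1 - (d : ℝ)) / ((β - α) / β)) =
      Cα * β / (β - α) * ε ^ (α + 1 - (d : ℝ)) := by
    field_simp
  rw [this, hβdef]
end

section
/- Let η be a nonnegative random variable with P(0 < η < t) ≤ C_α t^α for all t > 0, and suppose the integer d satisfies d < α + 1. Then sup_{ε ∈ (0,1)} E[η^{−(d−1)} 1{η > ε}] ≤ 1 + C_α(d−1)/(α+1−d), i.e. the truncated negative moments are bounded uniformly in ε. -/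
/-!
By the layer-cake formula, `∫_{η > ε} η^{-β} dP = ∫_0^∞ P(η > ε, η^{-β} > t) dt`. The part
`t ≤ 1` contributes at most `1`. For `t > 1` the event lies in `{0 < η < t^{-1/β}}`, of
probability at most `C t^{-α/β}` by the margin condition, and this is integrable on `(1, ∞)`
precisely because `β < α`, with integral `C β / (α - β)`.
-/

open MeasureTheory Set

def MarginCondition {Ω : Type*} [MeasurableSpace Ω] (P : Measure Ω) (η : Ω → ℝ) (C α : ℝ) :
    Prop :=
  ∀ t > 0, P {ω | 0 < η ω ∧ η ω < t} ≤ ENNReal.ofReal (C * t ^ α)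

theorem lintegral_Ioi_ofReal_rpow {p c : ℝ} (hp : p < -1) (hc : 0 < c) :
    ∫⁻ t in Ioi c, ENNReal.ofReal (t ^ p) = ENNReal.ofReal (-c ^ (p + 1) / (p + 1)) := by
  rw [← integral_Ioi_rpow_of_lt hp hc, ofReal_integral_eq_lintegral_ofReal
    (integrableOn_Ioi_rpow_of_lt hp hc)]
  filter_upwards [ae_restrict_mem measurableSet_Ioi] with t ht
  exact Real.rpow_nonneg (hc.trans ht).le p

section

variable {Ω : Type*} [MeasurableSpace Ω] {P : Measure Ω} {η : Ω → ℝ} {C α β ε : ℝ}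

theorem MarginCondition.measure_lt_rpow_neg_le (hmargin : MarginCondition P η C α)
    (hβ : 0 < β) (hε : 0 ≤ ε) {t : ℝ} (ht : 0 < t) :
    P ({ω | t < η ω ^ (-β)} ∩ {ω | ε < η ω}) ≤ ENNReal.ofReal (C * t ^ (-(α / β))) := by
  have hsub : {ω | t < η ω ^ (-β)} ∩ {ω | ε < η ω} ⊆
      {ω | 0 < η ω ∧ η ω < t ^ (-β)⁻¹} := by
    rintro ω ⟨hlt, hεη⟩
    have hη : 0 < η ω := hε.trans_lt hεη
    exact ⟨hη, (Real.lt_rpow_inv_iff_of_neg hη ht (neg_neg_of_pos hβ)).mpr hlt⟩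
  calc P ({ω | t < η ω ^ (-β)} ∩ {ω | ε < η ω})
      ≤ ENNReal.ofReal (C * (t ^ (-β)⁻¹) ^ α) :=
        (measure_mono hsub).trans (hmargin _ (Real.rpow_pos_of_pos ht _))
    _ = ENNReal.ofReal (C * t ^ (-(α / β))) := by
        rw [← Real.rpow_mul ht.le, inv_neg, neg_mul, inv_mul_eq_div]

theorem MarginCondition.setLIntegral_rpow_neg_le_of_pos [IsProbabilityMeasure P]
    (hmargin : MarginCondition P η C α) (hη : Measurable η) (hC : 0 ≤ C) (hβ : 0 < β)
    (hβα : β < α) (hε : 0 ≤ ε) :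
    ∫⁻ ω in {ω | ε < η ω}, ENNReal.ofReal (η ω ^ (-β)) ∂P ≤
      ENNReal.ofReal (1 + C * β / (α - β)) := by
  set Q := P.restrict {ω | ε < η ω}
  have hf : Measurable fun ω => η ω ^ (-β) := by fun_prop
  have hexp : -(α / β) < -1 := by
    rw [neg_lt_neg_iff, lt_div_iff₀ hβ]
    linarith
  have small : ∫⁻ t in Ioc (0 : ℝ) 1, Q {ω | t < η ω ^ (-β)} ≤ 1 := by
    calc ∫⁻ t in Ioc (0 : ℝ) 1, Q {ω | t < η ω ^ (-β)}
        ≤ ∫⁻ _ in Ioc (0 : ℝ) 1, 1 :=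
          lintegral_mono fun _ => (Measure.restrict_le_self _).trans prob_le_one
      _ = 1 := by simp
  have large : ∫⁻ t in Ioi (1 : ℝ), Q {ω | t < η ω ^ (-β)} ≤
      ENNReal.ofReal (C * β / (α - β)) := by
    calc ∫⁻ t in Ioi (1 : ℝ), Q {ω | t < η ω ^ (-β)}
        ≤ ∫⁻ t in Ioi (1 : ℝ), ENNReal.ofReal C * ENNReal.ofReal (t ^ (-(α / β))) := by
          refine setLIntegral_mono (by fun_prop) fun t ht => ?_
          rw [← ENNReal.ofReal_mul hC,
            Measure.restrict_apply (measurableSet_lt measurable_const hf)]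
          exact hmargin.measure_lt_rpow_neg_le hβ hε (zero_lt_one.trans ht)
      _ = ENNReal.ofReal (C * β / (α - β)) := by
          rw [lintegral_const_mul _ (by fun_prop), lintegral_Ioi_ofReal_rpow hexp one_pos,
            ← ENNReal.ofReal_mul hC, Real.one_rpow,
            show -(α / β) + 1 = -((α - β) / β) by field_simp; ring, neg_div_neg_eq, one_div_div,
            mul_div_assoc]
  have hf_nonneg : 0 ≤ᵐ[Q] fun ω => η ω ^ (-β) :=
    ae_restrict_of_forall_mem (measurableSet_lt measurable_const hη) fun ω hω =>
      Real.rpow_nonneg (hε.trans hω.le) _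
  rw [lintegral_eq_lintegral_meas_lt Q hf_nonneg hf.aemeasurable,
    ← Ioc_union_Ioi_eq_Ioi zero_le_one, lintegral_union measurableSet_Ioi (Ioc_disjoint_Ioi le_rfl),
    ENNReal.ofReal_add zero_le_one (div_nonneg (mul_nonneg hC hβ.le) (sub_nonneg.mpr hβα.le)),
    ENNReal.ofReal_one]
  exact add_le_add small large

theorem MarginCondition.setLIntegral_rpow_neg_le [IsProbabilityMeasure P]
    (hmargin : MarginCondition P η C α) (hη : Measurable η) (hC : 0 ≤ C) (hβ : 0 ≤ β)
    (hβα : β < α) (hε : 0 ≤ ε) :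
    ∫⁻ ω in {ω | ε < η ω}, ENNReal.ofReal (η ω ^ (-β)) ∂P ≤
      ENNReal.ofReal (1 + C * β / (α - β)) := by
  rcases hβ.eq_or_lt with rfl | hβ
  · simpa using prob_le_one
  · exact hmargin.setLIntegral_rpow_neg_le_of_pos hη hC hβ hβα hε

end

theorem stmt9_general {Ω : Type*} [MeasurableSpace Ω] (P : Measure Ω) [IsProbabilityMeasure P]
    (η : Ω → ℝ) (hη : Measurable η)
    (Cα α : ℝ) (hCα : 0 < Cα) (d : ℕ) (hd1 : 1 ≤ d)
    (hd : (d : ℝ) < α + 1)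
    (hmargin : ∀ t > 0, P {ω | 0 < η ω ∧ η ω < t} ≤ ENNReal.ofReal (Cα * t ^ α)) :
    ∀ ε ∈ Set.Ioo (0 : ℝ) 1,
      ∫⁻ ω in {ω | ε < η ω}, ENNReal.ofReal (η ω ^ (-((d : ℝ) - 1))) ∂P ≤
        ENNReal.ofReal (1 + Cα * ((d : ℝ) - 1) / (α + 1 - (d : ℝ))) := by
  intro ε hε
  have hd1' : (1 : ℝ) ≤ d := by exact_mod_cast hd1
  have h := MarginCondition.setLIntegral_rpow_neg_le hmargin hη hCα.le (sub_nonneg.mpr hd1')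
    (sub_lt_iff_lt_add.mpr hd) hε.1.le
  rwa [sub_sub_eq_add_sub] at h

/-- Under the margin condition `P(0 < η < t) ≤ C_α t^α` with integer `d < α + 1`,
the truncated negative moments `E[η^{-(d-1)} 1{η > ε}]` are bounded uniformly over
`ε ∈ (0,1)` by `1 + C_α (d-1)/(α+1-d)`. -/
theorem stmt9 {Ω : Type*} [MeasurableSpace Ω] (P : Measure Ω) [IsProbabilityMeasure P]
    (η : Ω → ℝ) (hη : Measurable η) (hη0 : ∀ ω, 0 ≤ η ω)
    (Cα α : ℝ) (hCα : 0 < Cα) (hα : 0 < α) (d : ℕ) (hd1 : 1 ≤ d)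
    (hd : (d : ℝ) < α + 1)
    (hmargin : ∀ t > 0, P {ω | 0 < η ω ∧ η ω < t} ≤ ENNReal.ofReal (Cα * t ^ α)) :
    ∀ ε ∈ Set.Ioo (0 : ℝ) 1,
      ∫⁻ ω in {ω | ε < η ω}, ENNReal.ofReal (η ω ^ (-((d : ℝ) - 1))) ∂P ≤
        ENNReal.ofReal (1 + Cα * ((d : ℝ) - 1) / (α + 1 - (d : ℝ))) :=
  stmt9_general P η hη Cα α hCα d hd1 hd hmargin
end

section
/- Let U and V be random variables with U = ∑_{t=1}^T Δ_t and V = ∑_{t=1}^T 1{Δ_t > 0}, where each Δ_t ≥ 0 and P(0 < Δ_t ≤ δ) ≤ C_α δ^α for all δ > 0 and each t. Then for every δ > 0, E[U] ≥ δ·E[V] − T·C_α·δ^{α+1}. Optimizing over δ yields E[U] ≥ (α/(α+1))·((α+1)C_α)^{−1/α}·E[V]^{(α+1)/α}·T^{−1/α}. -/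
open MeasureTheory

/-- For nonnegative instantaneous regrets `Δ_t` satisfying the margin bound
`P(0 < Δ_t ≤ δ) ≤ C_α δ^α`, with `U = ∑ Δ_t` and `V = ∑ 1{Δ_t > 0}`, one has
`E[U] ≥ δ E[V] - T C_α δ^(α+1)` for all `δ > 0`, and optimizing over `δ`,
`E[U] ≥ (α/(α+1)) ((α+1)C_α)^{-1/α} E[V]^{(α+1)/α} T^{-1/α}`. -/
theorem stmt10 {Ω : Type*} [MeasurableSpace Ω] (P : Measure Ω) [IsProbabilityMeasure P]
    (T : ℕ) (hT : 1 ≤ T) (Δ : Fin T → Ω → ℝ)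
    (hmeas : ∀ t, Measurable (Δ t)) (h0 : ∀ t ω, 0 ≤ Δ t ω)
    (hint : ∀ t, Integrable (Δ t) P)
    (Cα α : ℝ) (hCα : 0 < Cα) (hα : 0 < α)
    (hmargin : ∀ t, ∀ δ > (0 : ℝ),
      P {ω | 0 < Δ t ω ∧ Δ t ω ≤ δ} ≤ ENNReal.ofReal (Cα * δ ^ α)) :
    (∀ δ > (0 : ℝ), ∫ ω, (∑ t, Δ t ω) ∂P ≥
        δ * ∫ ω, (∑ t, if 0 < Δ t ω then (1 : ℝ) else 0) ∂P
          - (T : ℝ) * Cα * δ ^ (α + 1)) ∧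
    ∫ ω, (∑ t, Δ t ω) ∂P ≥
      (α / (α + 1)) * ((α + 1) * Cα) ^ (-1 / α) *
        (∫ ω, (∑ t, if 0 < Δ t ω then (1 : ℝ) else 0) ∂P) ^ ((α + 1) / α) *
        (T : ℝ) ^ (-1 / α) := by
  have hAm : ∀ t : Fin T, MeasurableSet {ω | 0 < Δ t ω} :=
    fun t => measurableSet_lt measurable_const (hmeas t)
  have hind : ∀ t : Fin T, (fun ω => if 0 < Δ t ω then (1:ℝ) else 0)
      = ({ω | 0 < Δ t ω} : Set Ω).indicator (fun _ => (1:ℝ)) := by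
    intro t; ext ω; simp [Set.indicator_apply]
  have hVint : ∀ t : Fin T, Integrable (fun ω => if 0 < Δ t ω then (1:ℝ) else 0) P := by
    intro t; rw [hind t]; exact (integrable_const 1).indicator (hAm t)
  have hVt : ∀ t : Fin T, ∫ ω, (if 0 < Δ t ω then (1:ℝ) else 0) ∂P
      = (P {ω | 0 < Δ t ω}).toReal := by
    intro t; rw [hind t, integral_indicator_const _ (hAm t)]; simp; rfl
  have hEV : ∫ ω, (∑ t, if 0 < Δ t ω then (1:ℝ) else 0) ∂P
      = ∑ t, (P {ω | 0 < Δ t ω}).toReal := by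
    rw [integral_finset_sum _ (fun t _ => hVint t)]
    exact Finset.sum_congr rfl fun t _ => hVt t
  have hEU : ∫ ω, (∑ t, Δ t ω) ∂P = ∑ t, ∫ ω, Δ t ω ∂P :=
    integral_finset_sum _ (fun t _ => hint t)
  -- key per-t step
  have step : ∀ t : Fin T, ∀ δ : ℝ, 0 < δ →
      δ * (P {ω | 0 < Δ t ω}).toReal - Cα * δ ^ (α + 1) ≤ ∫ ω, Δ t ω ∂P := by
    intro t δ hδ
    set B : Set Ω := {ω | 0 < Δ t ω ∧ Δ t ω ≤ δ} with hBdef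
    have hBm : MeasurableSet B := by
      have : B = {ω | 0 < Δ t ω} ∩ {ω | Δ t ω ≤ δ} := rfl
      rw [this]
      exact (hAm t).inter (measurableSet_le (hmeas t) measurable_const)
    have hfint : Integrable (fun ω =>
        δ * ({ω | 0 < Δ t ω} : Set Ω).indicator (fun _ => (1:ℝ)) ω
          - δ * B.indicator (fun _ => (1:ℝ)) ω) P :=
      (((integrable_const 1).indicator (hAm t)).const_mul δ).sub
        (((integrable_const 1).indicator hBm).const_mul δ)
    have hpt : ∀ ω, δ * ({ω | 0 < Δ t ω} : Set Ω).indicator (fun _ => (1:ℝ)) ω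
        - δ * B.indicator (fun _ => (1:ℝ)) ω ≤ Δ t ω := by
      intro ω
      by_cases h1 : 0 < Δ t ω
      · by_cases h2 : Δ t ω ≤ δ
        · simp [Set.indicator_apply, hBdef, h1, h2]
          linarith
        · simp [Set.indicator_apply, hBdef, h1, h2]
          linarith [not_le.mp h2]
      · simp [Set.indicator_apply, hBdef, h1]
        exact h0 t ω
    have hle := integral_mono hfint (hint t) hpt
    rw [integral_sub (((integrable_const 1).indicator (hAm t)).const_mul δ)
        (((integrable_const 1).indicator hBm).const_mul δ),
      integral_const_mul, integral_const_mul,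
      integral_indicator_const _ (hAm t), integral_indicator_const _ hBm] at hle
    simp only [smul_eq_mul, mul_one, Measure.real] at hle
    have hPB : (P B).toReal ≤ Cα * δ ^ α := by
      refine ENNReal.toReal_le_of_le_ofReal ?_ (hmargin t δ hδ)
      positivity
    have hpow : δ ^ (α + 1) = δ ^ α * δ := Real.rpow_add_one (ne_of_gt hδ) α
    nlinarith [hle, mul_le_mul_of_nonneg_left hPB (le_of_lt hδ)]
  -- part 1
  have part1 : ∀ δ > (0:ℝ), ∫ ω, (∑ t, Δ t ω) ∂P ≥
      δ * ∫ ω, (∑ t, if 0 < Δ t ω then (1 : ℝ) else 0) ∂P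
        - (T : ℝ) * Cα * δ ^ (α + 1) := by
    intro δ hδ
    rw [ge_iff_le, hEU, hEV]
    have : δ * ∑ t, (P {ω | 0 < Δ t ω}).toReal - (T : ℝ) * Cα * δ ^ (α + 1)
        = ∑ t : Fin T, (δ * (P {ω | 0 < Δ t ω}).toReal - Cα * δ ^ (α + 1)) := by
      rw [Finset.sum_sub_distrib, ← Finset.mul_sum, Finset.sum_const]
      simp [Finset.card_univ]
      ring
    rw [this]
    exact Finset.sum_le_sum fun t _ => step t δ hδ
  refine ⟨part1, ?_⟩
  set EV := ∫ ω, (∑ t, if 0 < Δ t ω then (1:ℝ) else 0) ∂P with hEVdef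
  have hEVnn : 0 ≤ EV := by
    rw [hEV]
    exact Finset.sum_nonneg fun t _ => ENNReal.toReal_nonneg
  have hUnn : 0 ≤ ∫ ω, (∑ t, Δ t ω) ∂P :=
    integral_nonneg fun ω => Finset.sum_nonneg fun t _ => h0 t ω
  rcases eq_or_lt_of_le hEVnn with hEV0 | hEVpos
  · rw [← hEV0, Real.zero_rpow (by positivity : ((α+1)/α : ℝ) ≠ 0)]
    simpa using hUnn
  · have hTpos : (0:ℝ) < (T:ℝ) := by exact_mod_cast hT
    set c : ℝ := (α + 1) * (T:ℝ) * Cα with hc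
    have hcpos : 0 < c := by positivity
    set δ : ℝ := (EV / c) ^ (1/α) with hδdef
    have hδpos : 0 < δ := Real.rpow_pos_of_pos (div_pos hEVpos hcpos) _
    have hδα : δ ^ α = EV / c := by
      rw [hδdef, ← Real.rpow_mul (div_pos hEVpos hcpos).le, one_div,
        inv_mul_cancel₀ (ne_of_gt hα), Real.rpow_one]
    have hT0 : (T:ℝ) ≠ 0 := ne_of_gt hTpos
    have hα1 : α + 1 ≠ 0 := by positivity
    have h1 : δ * EV - (T:ℝ) * Cα * δ ^ (α + 1) = (α / (α + 1)) * δ * EV := by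
      rw [Real.rpow_add_one (ne_of_gt hδpos), hδα, hc]
      field_simp
      ring
    have hδeq : δ = EV ^ (1/α) / (((α + 1) * Cα) ^ (1/α) * (T:ℝ) ^ (1/α)) := by
      rw [hδdef, Real.div_rpow hEVnn hcpos.le, hc]
      congr 1
      rw [show (α + 1) * (T:ℝ) * Cα = ((α + 1) * Cα) * (T:ℝ) by ring,
        Real.mul_rpow (by positivity) (by positivity)]
    have hfin : (α / (α + 1)) * δ * EV
        = (α / (α + 1)) * ((α + 1) * Cα) ^ (-1 / α) * EV ^ ((α + 1) / α)
          * (T:ℝ) ^ (-1 / α) := by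
      rw [hδeq, show (-1/α : ℝ) = -(1/α) by ring, Real.rpow_neg (by positivity),
        Real.rpow_neg (by positivity), show (α + 1)/α = 1/α + 1 by field_simp; ring,
        Real.rpow_add hEVpos, Real.rpow_one]
      field_simp
    rw [ge_iff_le, ← hfin, ← h1]
    exact part1 δ hδpos
end
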